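/- For every n ≥ 1 and distinct i,j ∈ {1,2,3}, the nonterminal h_ij(n) of the grammar Γ_N derives a unique terminal word, namely the recursive Hanoi sequence hanoi(n, i, j, k) (with k the third peg), encoded over the alphabet {p_12, p_13, p_21, p_23, p_31, p_32}. -/
import Mathlib


/-- Symbols of the grammar `Γ_N`: terminals `p i j` ("move the top disc from
peg `i` to peg `j`") and nonterminals `h i j n`.  Pegs are `Fin 3`
(`0` = peg 1, `1` = peg 2, `2` = peg 3). -/
inductive GSym where
  | p : Fin 3 → Fin 3 → GSym
  | h : Fin 3 → Fin 3 → ℕ → GSym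
deriving DecidableEq

/-- One-step rewriting in `Γ_N`: the productions are `h_ij(1) → p_ij` and
`h_ij(n) → h_ik(n-1) p_ij h_kj(n-1)` for `2 ≤ n ≤ N`, `{i,j,k} = {1,2,3}`,
applied inside an arbitrary context. -/
inductive GStep (N : ℕ) : List GSym → List GSym → Prop
  | base (α β : List GSym) (i j : Fin 3) (hij : i ≠ j) :
      GStep N (α ++ GSym.h i j 1 :: β) (α ++ GSym.p i j :: β)
  | expand (α β : List GSym) (i j k : Fin 3) (n : ℕ)
      (hij : i ≠ j) (hjk : j ≠ k) (hki : k ≠ i) (h2 : 2 ≤ n) (hN : n ≤ N) :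
      GStep N (α ++ GSym.h i j n :: β)
        (α ++ GSym.h i k (n - 1) :: GSym.p i j :: GSym.h k j (n - 1) :: β)

/-- A word is terminal if it consists only of terminal symbols `p i j`. -/
def Terminal (w : List GSym) : Prop := ∀ s ∈ w, ∃ i j, s = GSym.p i j

/-- `L(Γ_N)`: terminal words derivable from the start symbol `h_13(N)`. -/
def Lang (N : ℕ) : Set (List GSym) :=
  { w | Terminal w ∧ Relation.ReflTransGen (GStep N) [GSym.h 0 2 N] w }

/-- The recursive Hanoi move sequence. -/
def hanoi : ℕ → Fin 3 → Fin 3 → Fin 3 → List (Fin 3 × Fin 3)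
  | 0, _, _, _ => []
  | 1, i, j, _ => [(i, j)]
  | n + 2, i, j, k => hanoi (n + 1) i k j ++ [(i, j)] ++ hanoi (n + 1) k j i

namespace HanoiAux

lemma trip (i j k : Fin 3) (hij : i ≠ j) (hjk : j ≠ k) (hki : k ≠ i) :
    -(i + j) = k := by
  revert hij hjk hki; revert i j k; decide

/-- Yield of a symbol: terminals map to themselves, nonterminals to their
unique terminal word. -/
def yd : GSym → List GSym
  | .p i j => [.p i j]
  | .h i j n => (hanoi n i j (-(i + j))).map fun m => GSym.p m.1 m.2

lemma step_yield {N : ℕ} {u v : List GSym} (h : GStep N u v) :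
    u.flatMap yd = v.flatMap yd := by
  cases h with
  | base α β i j hij =>
      simp [yd, hanoi]
  | expand α β i j k n hij hjk hki h2 hN =>
      obtain ⟨m, rfl⟩ : ∃ m, n = m + 2 := ⟨n - 2, by omega⟩
      have hk : -(i + j) = k := trip i j k hij hjk hki
      have hj : -(i + k) = j := trip i k j (Ne.symm hki) (Ne.symm hjk) (Ne.symm hij)
      have hi : -(k + j) = i := trip k j i (Ne.symm hjk) (Ne.symm hij) (Ne.symm hki)
      simp only [List.flatMap_append, List.flatMap_cons, List.flatMap_nil, yd, hk, hj, hi]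
      simp [hanoi, List.append_assoc]

lemma derives_yield {N : ℕ} {u v : List GSym}
    (h : Relation.ReflTransGen (GStep N) u v) : u.flatMap yd = v.flatMap yd := by
  induction h with
  | refl => rfl
  | tail _ hstep ih => exact ih.trans (step_yield hstep)

lemma terminal_yield {w : List GSym} (hw : Terminal w) : w.flatMap yd = w := by
  induction w with
  | nil => rfl
  | cons s t ih =>
      obtain ⟨i, j, rfl⟩ := hw s (by simp)
      have : Terminal t := fun x hx => hw x (by simp [hx])
      simp [yd, ih this]

lemma ctx {N : ℕ} {u v : List GSym} (γ δ : List GSym) (h : GStep N u v) :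
    GStep N (γ ++ u ++ δ) (γ ++ v ++ δ) := by
  cases h with
  | base α β i j hij =>
      have := GStep.base (N := N) (γ ++ α) (β ++ δ) i j hij
      simpa [List.append_assoc] using this
  | expand α β i j k n hij hjk hki h2 hN =>
      have := GStep.expand (N := N) (γ ++ α) (β ++ δ) i j k n hij hjk hki h2 hN
      simpa [List.append_assoc] using this

lemma ctx' {N : ℕ} {u v : List GSym} (γ δ : List GSym)
    (h : Relation.ReflTransGen (GStep N) u v) :
    Relation.ReflTransGen (GStep N) (γ ++ u ++ δ) (γ ++ v ++ δ) := by
  induction h with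
  | refl => exact Relation.ReflTransGen.refl
  | tail _ hstep ih => exact ih.tail (ctx γ δ hstep)

lemma derives_hanoi (N : ℕ) : ∀ n, 1 ≤ n → n ≤ N →
    ∀ i j k : Fin 3, i ≠ j → j ≠ k → k ≠ i →
    Relation.ReflTransGen (GStep N) [GSym.h i j n]
      ((hanoi n i j k).map fun m => GSym.p m.1 m.2) := by
  intro n
  induction n using Nat.strong_induction_on with
  | _ n ih =>
    intro hn hnN i j k hij hjk hki
    match n, hn with
    | 1, _ =>
        have := GStep.base (N := N) [] [] i j hij
        simpa [hanoi] using Relation.ReflTransGen.single this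
    | (m + 2), _ =>
        have h0 : GStep N [GSym.h i j (m + 2)]
            [GSym.h i k (m + 1), GSym.p i j, GSym.h k j (m + 1)] := by
          have := GStep.expand (N := N) [] [] i j k (m + 2) hij hjk hki
            (by omega) hnN
          simpa using this
        have h1 := ctx' (N := N) [] [GSym.p i j, GSym.h k j (m + 1)]
          (ih (m + 1) (by omega) (by omega) (by omega) i k j
            (Ne.symm hki) (Ne.symm hjk) (Ne.symm hij))
        have h2 := ctx' (N := N)
          (((hanoi (m + 1) i k j).map fun m => GSym.p m.1 m.2) ++ [GSym.p i j]) []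
          (ih (m + 1) (by omega) (by omega) (by omega) k j i
            (Ne.symm hjk) (Ne.symm hij) (Ne.symm hki))
        refine (Relation.ReflTransGen.single h0).trans ?_
        refine (by simpa using h1 : Relation.ReflTransGen (GStep N) _ _).trans ?_
        simpa [hanoi, List.append_assoc] using h2

end HanoiAux

open HanoiAux in

/-- for `1 ≤ n ≤ N` and pairwise distinct pegs `i, j, k`, the
terminal words derivable in `Γ_N` from the nonterminal `h_ij(n)` are exactly
one word: the encoding of the recursive Hanoi sequence `hanoi n i j k`. -/
theorem derives_iff_hanoi (N n : ℕ) (hn : 1 ≤ n) (hnN : n ≤ N)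
    (i j k : Fin 3) (hij : i ≠ j) (hjk : j ≠ k) (hki : k ≠ i) :
    ∀ w : List GSym,
      (Terminal w ∧ Relation.ReflTransGen (GStep N) [GSym.h i j n] w) ↔
        w = (hanoi n i j k).map (fun m => GSym.p m.1 m.2) := by
  intro w
  constructor
  · rintro ⟨hw, hd⟩
    have hy := derives_yield hd
    rw [terminal_yield hw] at hy
    have hk : -(i + j) = k := trip i j k hij hjk hki
    simpa [yd, hk] using hy.symm
  · rintro rfl
    refine ⟨?_, derives_hanoi N n hn hnN i j k hij hjk hki⟩
    intro s hs
    simp only [List.mem_map] at hs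
    obtain ⟨m, _, rfl⟩ := hs
    exact ⟨m.1, m.2, rfl⟩
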